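/- Let D ⊂ ℝ³ be a bounded domain with smooth boundary and let 6/5 < p < 2. Let P_N denote the orthogonal projection in L²(D) onto the span of the first N eigenfunctions e₁, …, e_N of the Dirichlet Laplacian. Then the operator norms satisfy ‖I − P_N‖_{L(H^{1,p}(D), L²(D))} → 0 as N → ∞. -/
import Mathlib


/-!
Statement 8: for `6/5 < p < 2`, the orthogonal projections `P_N` of `L²(D)` onto the
span of the first `N` eigenfunctions of the Dirichlet Laplacian satisfy
`‖I − P_N‖_{L(H^{1,p}(D), L²(D))} → 0` as `N → ∞`.
Modelling: `L²(D)` is the concrete Hilbert space `Lp ℝ 2 (volume.restrict D)`; the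
orthonormal basis of Dirichlet eigenfunctions is a Hilbert basis `e : ℕ → L²(D)`;
the space `H^{1,p}(D)` is an abstract normed space `W` whose (Sobolev) embedding
`ι : W →L L²(D)` is a compact operator (this is the content of the Sobolev embedding
theorem for `p > 6/5` used in the paper).  The projection `P_N` composed with `ι` is
the rank-`N` operator `Σ_{j<N} ⟨e j, ι ·⟩ e j`, and the conclusion states that
`‖ι − P_N ∘ ι‖ → 0`.
-/

open MeasureTheory Real Filter

noncomputable section

open RealInnerProductSpace in
theorem aux_proj_tendsto {H : Type*} [NormedAddCommGroup H] [InnerProductSpace ℝ H]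
    {W : Type*} [NormedAddCommGroup W] [NormedSpace ℝ W]
    (e : HilbertBasis ℕ ℝ H) (ι : W →L[ℝ] H) (hcompact : IsCompactOperator ι) :
    Tendsto
      (fun N : ℕ =>
        ‖ι - (∑ j ∈ Finset.range N,
            (innerSL ℝ (e j)).smulRight (e j)).comp ι‖)
      atTop (nhds 0) := by
  set T : ℕ → H →L[ℝ] H := fun N => ∑ j ∈ Finset.range N,
    (innerSL ℝ (e j)).smulRight (e j) with hT
  have hTapp : ∀ N x, T N x = ∑ j ∈ Finset.range N, ⟪e j, x⟫ • e j := by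
    intro N x
    simp [hT, ContinuousLinearMap.sum_apply]
  -- contraction property
  have hcontr : ∀ N x, ‖x - T N x‖ ≤ ‖x‖ := by
    intro N x
    have horth : ⟪x - T N x, T N x⟫ = 0 := by
      rw [hTapp, inner_sum]
      refine Finset.sum_eq_zero fun j hj => ?_
      have hS : ⟪(∑ k ∈ Finset.range N, ⟪e k, x⟫ • e k), e j⟫ = ⟪e j, x⟫ := by
        rw [real_inner_comm]
        exact e.orthonormal.inner_right_sum (fun k => ⟪e k, x⟫) hj
      rw [real_inner_smul_right, inner_sub_left, hS, real_inner_comm x (e j)]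
      ring
    have hpyth : ‖x‖ ^ 2 = ‖x - T N x‖ ^ 2 + ‖T N x‖ ^ 2 := by
      have := norm_add_sq_real (x - T N x) (T N x)
      simp only [sub_add_cancel, horth] at this
      linarith
    nlinarith [norm_nonneg (x - T N x), norm_nonneg x, norm_nonneg (T N x)]
  -- pointwise convergence
  have hpt : ∀ x, Tendsto (fun N => ‖x - T N x‖) atTop (nhds 0) := by
    intro x
    have hs : HasSum (fun j => ⟪e j, x⟫ • e j) x := by
      simpa [e.repr_apply_apply] using e.hasSum_repr x
    have := hs.tendsto_sum_nat
    have h2 : Tendsto (fun N => x - T N x) atTop (nhds 0) := by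
      have := tendsto_const_nhds (x := x) (f := atTop (α := ℕ)) |>.sub this
      simpa [hTapp] using this
    simpa using h2.norm
  rw [Metric.tendsto_atTop]
  intro ε hε
  -- compact set containing the image of the unit ball
  obtain ⟨K, hK, hKsub⟩ := hcompact.image_subset_compact_of_isVonNBounded
    (NormedSpace.isVonNBounded_closedBall ℝ W 1)
  obtain ⟨t, htK, htfin, htcov⟩ := hK.finite_cover_balls (by positivity : (0:ℝ) < ε/3)
  have hev : ∀ᶠ N in atTop, ∀ y ∈ htfin.toFinset, ‖y - T N y‖ < ε / 3 := by
    rw [eventually_all_finset]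
    intro y hy
    exact (hpt y).eventually_lt_const (by positivity)
  obtain ⟨N₀, hN₀⟩ := eventually_atTop.mp hev
  refine ⟨N₀, fun N hN => ?_⟩
  have hKest : ∀ y ∈ K, ‖y - T N y‖ ≤ 2 * ε / 3 := by
    intro y hy
    obtain ⟨z, hz, hyz⟩ := Set.mem_iUnion₂.mp (htcov hy)
    have h1 : ‖(y - z) - T N (y - z)‖ ≤ ‖y - z‖ := hcontr N (y - z)
    have h2 : ‖z - T N z‖ < ε / 3 := hN₀ N hN z (htfin.mem_toFinset.mpr hz)
    have h3 : ‖y - z‖ < ε / 3 := by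
      simpa [dist_eq_norm] using hyz
    have hdec : y - T N y = ((y - z) - T N (y - z)) + (z - T N z) := by
      simp only [map_sub]
      abel
    calc ‖y - T N y‖ ≤ ‖(y - z) - T N (y - z)‖ + ‖z - T N z‖ := by
          rw [hdec]; exact norm_add_le _ _
      _ ≤ 2 * ε / 3 := by linarith
  have hop : ‖ι - (T N).comp ι‖ ≤ 2 * ε / 3 := by
    refine ContinuousLinearMap.opNorm_le_bound _ (by positivity) fun w => ?_
    rcases eq_or_ne w 0 with rfl | hw
    · simp
    · have hwn : ‖w‖ ≠ 0 := norm_ne_zero_iff.mpr hw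
      set u : W := ‖w‖⁻¹ • w with hu
      have hun : ‖u‖ = 1 := by
        rw [hu, norm_smul, norm_inv, norm_norm, inv_mul_cancel₀ hwn]
      have huK : ι u ∈ K := hKsub ⟨u, by simp [Metric.mem_closedBall, dist_zero_right, hun], rfl⟩
      have hwu : w = ‖w‖ • u := by
        rw [hu, smul_smul, mul_inv_cancel₀ hwn, one_smul]
      calc ‖(ι - (T N).comp ι) w‖ = ‖ι w - T N (ι w)‖ := by
            simp [ContinuousLinearMap.sub_apply]
        _ = ‖w‖ * ‖ι u - T N (ι u)‖ := by
            have h : ι u - T N (ι u) = ‖w‖⁻¹ • (ι w - T N (ι w)) := by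
              simp only [hu, _root_.map_smul, ContinuousLinearMap.map_smul, smul_sub]
            rw [h, norm_smul, norm_inv, norm_norm, ← mul_assoc, mul_inv_cancel₀ hwn, one_mul]
        _ ≤ ‖w‖ * (2 * ε / 3) := by
            exact mul_le_mul_of_nonneg_left (hKest _ huK) (norm_nonneg w)
        _ = 2 * ε / 3 * ‖w‖ := mul_comm _ _
  have : ‖ι - (T N).comp ι‖ < ε := lt_of_le_of_lt hop (by linarith)
  simpa [Real.dist_eq, abs_of_nonneg (norm_nonneg _)] using this



theorem nlw_projection_operator_norm_tendsto_zero
    (D : Set (EuclideanSpace ℝ (Fin 3))) (hD : IsOpen D) (hDb : Bornology.IsBounded D)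
    (p : ℝ) (hp : 6 / 5 < p) (hp2 : p < 2)
    {W : Type*} [NormedAddCommGroup W] [NormedSpace ℝ W]  -- the space H^{1,p}(D)
    -- the orthonormal basis of L²(D) formed by the Dirichlet-Laplacian eigenfunctions
    (e : HilbertBasis ℕ ℝ (Lp ℝ 2 (volume.restrict D)))
    -- the compact Sobolev embedding H^{1,p}(D) ↪ L²(D)
    (ι : W →L[ℝ] Lp ℝ 2 (volume.restrict D))
    (hcompact : IsCompactOperator ι) :
    Tendsto
      (fun N : ℕ =>
        ‖ι - (∑ j ∈ Finset.range N,
            (innerSL ℝ (e j)).smulRight (e j)).comp ι‖)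
      atTop (nhds 0) :=
  aux_proj_tendsto e ι hcompact
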